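/- Let (u_m) ⊂ L²([0,1],ℝ^k) with u_m ⇀ u_∞ weakly in L². For each m ∈ ℕ ∪ {∞}, let X_m : [0,1] × Θ → ℝⁿ be the map X_m(t,θ) = x_{u_m}^θ(t) collecting the ensemble trajectories. Then sup_{(t,θ)∈[0,1]×Θ} |X_m(t,θ) − X_∞(t,θ)|₂ → 0 as m → ∞, i.e., the ensemble flow maps converge uniformly on [0,1] × Θ. -/

import Mathlib

/-!
By the Grönwall inequality, `X_m(t, θ) - X_∞(t, θ)` is controlled by the forcing term
`G_m(t, θ) = ∫₀ᵗ Σᵢ (u_m - u_∞)ᵢ(s) Fᵢ(X_∞(θ, s), θ) ds`, with a constant that only depends on a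
bound for `‖u_m‖_{L¹}`; weak convergence provides such a bound by Banach–Steinhaus. So it suffices
that `G_m → 0` uniformly on `[0,1] × Θ`. Pointwise this is weak convergence tested against
`s ↦ 𝟙_{[0,t]}(s) Fᵢ(X_∞(θ, s), θ)`. The `G_m` are equicontinuous, because `L²`-bounded controls are
uniformly integrable and `(s, θ) ↦ Fᵢ(X_∞(θ, s), θ)` is uniformly continuous on the compact set
`[0,1] × Θ` (the flow `X_∞` is continuous in `θ` uniformly in `t`, again by Grönwall). On a compact
set, pointwise convergence of an equicontinuous family is uniform (Arzelà–Ascoli).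

The Grönwall inequality is needed with the merely integrable coefficient `L (1 + k ‖u_m(s)‖)`;
it is proved by cutting `[0,1]` into finitely many pieces on which the coefficient has integral
at most `1/2`.
-/

open MeasureTheory Set Filter Topology

noncomputable section

variable {n d k : ℕ}

/-- `x` is the trajectory on `[0,1]` of the affine-control system
`ẋ(t) = F₀(x(t),θ) + Σᵢ uᵢ(t) Fᵢ(x(t),θ)`, `x(0) = x₀(θ)`,
written in integral (Carathéodory) form. -/
def IsTrajectory
    (F0 : EuclideanSpace ℝ (Fin n) → EuclideanSpace ℝ (Fin d) → EuclideanSpace ℝ (Fin n))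
    (F : Fin k → EuclideanSpace ℝ (Fin n) → EuclideanSpace ℝ (Fin d) →
      EuclideanSpace ℝ (Fin n))
    (x0 : EuclideanSpace ℝ (Fin d) → EuclideanSpace ℝ (Fin n))
    (u : ℝ → EuclideanSpace ℝ (Fin k)) (θ : EuclideanSpace ℝ (Fin d))
    (x : ℝ → EuclideanSpace ℝ (Fin n)) : Prop :=
  ContinuousOn x (Icc 0 1) ∧
    ∀ t ∈ Icc (0 : ℝ) 1,
      x t = x0 θ + ∫ s in (0 : ℝ)..t, (F0 (x s) θ + ∑ i, u s i • F i (x s) θ)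

/-- The squared `L²([0,1])` norm of a control. -/
def l2sq (u : ℝ → EuclideanSpace ℝ (Fin k)) : ℝ :=
  ∫ t in Icc (0 : ℝ) 1, ‖u t‖ ^ 2

/-- Weak convergence `u_m ⇀ u_∞` in `L²([0,1],ℝ^k)`. -/
def WeakL2 (u : ℕ → ℝ → EuclideanSpace ℝ (Fin k))
    (uinf : ℝ → EuclideanSpace ℝ (Fin k)) : Prop :=
  ∀ v : ℝ → EuclideanSpace ℝ (Fin k), MemLp v 2 (volume.restrict (Icc (0 : ℝ) 1)) →
    Tendsto (fun m => ∫ t in Icc (0 : ℝ) 1, (inner ℝ (v t) (u m t) : ℝ)) atTop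
      (𝓝 (∫ t in Icc (0 : ℝ) 1, (inner ℝ (v t) (uinf t) : ℝ)))

open scoped InnerProductSpace Interval

theorem MeasureTheory.IntegrableOn.intervalIntegrable_of_mem_Icc {E : Type*}
    [NormedAddCommGroup E] {μ : Measure ℝ} {f : ℝ → E} {a b c d : ℝ}
    (hf : IntegrableOn f (Icc a b) μ) (hc : c ∈ Icc a b) (hd : d ∈ Icc a b) :
    IntervalIntegrable f μ c d :=
  (hf.mono_set (uIcc_subset_Icc hc hd)).intervalIntegrable

lemma ContinuousOn.memLp_Icc {E : Type*} [NormedAddCommGroup E] {f : ℝ → E} {a b : ℝ}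
    {p : ENNReal} (hf : ContinuousOn f (Icc a b)) : MemLp f p (volume.restrict (Icc a b)) := by
  obtain ⟨C, hC⟩ := isCompact_Icc.exists_bound_of_continuousOn hf
  exact MemLp.of_bound (hf.aestronglyMeasurable measurableSet_Icc) C
    (ae_restrict_of_forall_mem measurableSet_Icc hC)

lemma Real.volume_real_uIoc (a b : ℝ) : volume.real (Ι a b) = |b - a| := by
  rw [measureReal_def, Real.volume_uIoc, ENNReal.toReal_ofReal (abs_nonneg _)]

lemma MeasureTheory.MemLp.integrable_inner {α E : Type*} [MeasurableSpace α] {μ : Measure α}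
    [NormedAddCommGroup E] [InnerProductSpace ℝ E] {f g : α → E} (hf : MemLp f 2 μ)
    (hg : MemLp g 2 μ) : Integrable (fun x => ⟪f x, g x⟫_ℝ) μ :=
  (L2.integrable_inner (𝕜 := ℝ) hf.toLp hg.toLp).congr <| by
    filter_upwards [hf.coeFn_toLp, hg.coeFn_toLp] with x hfx hgx
    rw [hfx, hgx]

theorem EquicontinuousOn.tendstoUniformlyOn_of_tendsto {ι X α : Type*} [TopologicalSpace X]
    [UniformSpace α] {F : ι → X → α} {f : X → α} {l : Filter ι} {K : Set X} (hK : IsCompact K)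
    (hF : EquicontinuousOn F K) (hlim : ∀ x ∈ K, Tendsto (F · x) l (𝓝 (f x))) :
    TendstoUniformlyOn F f l K := by
  have := (EquicontinuousOn.tendsto_uniformOnFun_iff_pi' (𝔖 := {K}) (by simpa using hK)
    (by simpa using hF) l f).2 (by
      rw [sUnion_singleton]
      exact tendsto_pi_nhds.2 fun x => hlim x x.2)
  exact UniformOnFun.tendsto_iff_tendstoUniformlyOn.1 this K rfl

lemma continuousOn_prod_of_tendstoUniformlyOn {α β γ : Type*} [TopologicalSpace α]
    [TopologicalSpace β] [UniformSpace γ] {f : α × β → γ} {s : Set α} {t : Set β}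
    (hcont : ∀ b ∈ t, ContinuousOn (fun a => f (a, b)) s)
    (hunif : ∀ b ∈ t, TendstoUniformlyOn (fun b' a => f (a, b')) (fun a => f (a, b)) (𝓝[t] b) s) :
    ContinuousOn f (s ×ˢ t) := by
  rintro ⟨a, b⟩ ⟨ha, hb⟩
  refine continuousWithinAt_of_locally_uniform_approx_of_continuousWithinAt ⟨ha, hb⟩
    fun U hU => ⟨s ×ˢ {b' | ∀ a ∈ s, (f (a, b'), f (a, b)) ∈ U}, ?_,
      (fun a => f (a, b)) ∘ Prod.fst,
      (hcont b hb a ha).comp continuousWithinAt_fst fun q hq => hq.1,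
      fun q hq => hq.2 q.1 hq.1⟩
  rw [nhdsWithin_prod_eq]
  exact prod_mem_prod self_mem_nhdsWithin (hunif b hb _ (symm_le_uniformity hU))

section JointlyLipschitz

variable {X Y Z : Type*} [SeminormedAddCommGroup X] [SeminormedAddCommGroup Y]
  [SeminormedAddCommGroup Z]

def JointlyLipschitzOn (L : ℝ) (G : X → Y → Z) (Θ : Set Y) : Prop :=
  ∀ x₁ x₂ θ₁ θ₂, θ₁ ∈ Θ → θ₂ ∈ Θ → ‖G x₁ θ₁ - G x₂ θ₂‖ ≤ L * (‖x₁ - x₂‖ + ‖θ₁ - θ₂‖)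

variable {L : ℝ} {G : X → Y → Z} {Θ : Set Y}

lemma JointlyLipschitzOn.weaken (hG : JointlyLipschitzOn L G Θ) {L' : ℝ} (hL : L ≤ L') :
    JointlyLipschitzOn L' G Θ := fun x₁ x₂ θ₁ θ₂ h₁ h₂ =>
  (hG x₁ x₂ θ₁ θ₂ h₁ h₂).trans (by gcongr)

lemma JointlyLipschitzOn.continuousOn_uncurry (hG : JointlyLipschitzOn L G Θ) :
    ContinuousOn (Function.uncurry G) (univ ×ˢ Θ) := by
  refine (LipschitzOnWith.of_dist_le_mul (K := 2 * L.toNNReal) fun p hp q hq => ?_).continuousOn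
  have h₁ : ‖p.1 - q.1‖ ≤ dist p q := dist_eq_norm p q ▸ norm_fst_le (p - q)
  have h₂ : ‖p.2 - q.2‖ ≤ dist p q := dist_eq_norm p q ▸ norm_snd_le (p - q)
  calc dist (G p.1 p.2) (G q.1 q.2) ≤ L * (‖p.1 - q.1‖ + ‖p.2 - q.2‖) :=
        (dist_eq_norm _ _).trans_le (hG _ _ _ _ hp.2 hq.2)
    _ ≤ L.toNNReal * (dist p q + dist p q) := by gcongr; exact L.le_coe_toNNReal
    _ = ↑(2 * L.toNNReal) * dist p q := by push_cast; ring

lemma JointlyLipschitzOn.continuousOn_comp (hG : JointlyLipschitzOn L G Θ) {α : Type*}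
    [TopologicalSpace α] {z : α → X} {ϑ : α → Y} {s : Set α} (hz : ContinuousOn z s)
    (hϑ : ContinuousOn ϑ s) (hϑΘ : MapsTo ϑ s Θ) : ContinuousOn (fun a => G (z a) (ϑ a)) s :=
  hG.continuousOn_uncurry.comp (hz.prodMk hϑ) fun _ ha => ⟨mem_univ _, hϑΘ ha⟩

end JointlyLipschitz

section Gronwall

variable {c y : ℝ → ℝ} {A : ℝ}

lemma le_two_mul_of_le_add_integral (hc : IntegrableOn c (Icc 0 1))
    (hc0 : ∀ s ∈ Icc (0 : ℝ) 1, 0 ≤ c s) (hy : ContinuousOn y (Icc 0 1))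
    (hy0 : ∀ s ∈ Icc (0 : ℝ) 1, 0 ≤ y s)
    (hineq : ∀ t ∈ Icc (0 : ℝ) 1, y t ≤ A + ∫ s in (0 : ℝ)..t, c s * y s)
    {a b B : ℝ} (ha : 0 ≤ a) (hab : a ≤ b) (hb : b ≤ 1) (hcab : ∫ s in a..b, c s ≤ 1 / 2)
    (hB : A + ∫ s in (0 : ℝ)..a, c s * y s ≤ B) :
    A + ∫ s in (0 : ℝ)..b, c s * y s ≤ 2 * B := by
  have hsub : Icc a b ⊆ Icc 0 1 := Icc_subset_Icc ha hb
  have ha' : a ∈ Icc (0 : ℝ) 1 := hsub (left_mem_Icc.2 hab)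
  have hcy : IntegrableOn (fun s => c s * y s) (Icc 0 1) := hc.mul_continuousOn hy isCompact_Icc
  obtain ⟨r₀, hr₀, hmax⟩ := isCompact_Icc.exists_isMaxOn (nonempty_Icc.2 hab) (hy.mono hsub)
  -- `∫ c ≤ 1/2` on `[a, b]`, so the maximum `y r₀` of `y` there can absorb its own contribution
  have key : ∀ r ∈ Icc a b, A + ∫ s in (0 : ℝ)..r, c s * y s ≤ B + y r₀ / 2 := by
    intro r hr
    have hr' : r ∈ Icc (0 : ℝ) 1 := hsub hr
    have hsplit := intervalIntegral.integral_add_adjacent_intervals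
      (hcy.intervalIntegrable_of_mem_Icc (left_mem_Icc.2 zero_le_one) ha')
      (hcy.intervalIntegrable_of_mem_Icc ha' hr')
    have hbound : ∫ s in a..r, c s * y s ≤ (∫ s in a..r, c s) * y r₀ := by
      rw [← intervalIntegral.integral_mul_const]
      exact intervalIntegral.integral_mono_on hr.1 (hcy.intervalIntegrable_of_mem_Icc ha' hr')
        ((hc.intervalIntegrable_of_mem_Icc ha' hr').mul_const _)
        fun s hs => mul_le_mul_of_nonneg_left (hmax ⟨hs.1, hs.2.trans hr.2⟩)
          (hc0 s (hsub ⟨hs.1, hs.2.trans hr.2⟩))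
    have hcar : ∫ s in a..r, c s ≤ 1 / 2 := by
      refine le_trans ?_ hcab
      rw [← intervalIntegral.integral_add_adjacent_intervals
        (hc.intervalIntegrable_of_mem_Icc ha' hr')
        (hc.intervalIntegrable_of_mem_Icc hr' (hsub (right_mem_Icc.2 hab)))]
      exact le_add_of_nonneg_right (intervalIntegral.integral_nonneg hr.2
        fun s hs => hc0 s (hsub ⟨hr.1.trans hs.1, hs.2⟩))
    have := mul_le_mul_of_nonneg_right hcar (hy0 r₀ (hsub hr₀))
    linarith
  have hr₀le := (hineq r₀ (hsub hr₀)).trans (key r₀ hr₀)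
  linarith [key b (right_mem_Icc.2 hab)]

-- cross the levels `∫₀ᵗ c = j/2` one at a time, doubling the bound at each crossing
lemma add_integral_le_mul_two_pow (hc : IntegrableOn c (Icc 0 1))
    (hc0 : ∀ s ∈ Icc (0 : ℝ) 1, 0 ≤ c s) (hy : ContinuousOn y (Icc 0 1))
    (hy0 : ∀ s ∈ Icc (0 : ℝ) 1, 0 ≤ y s)
    (hineq : ∀ t ∈ Icc (0 : ℝ) 1, y t ≤ A + ∫ s in (0 : ℝ)..t, c s * y s) (j : ℕ) :
    ∀ t ∈ Icc (0 : ℝ) 1, ∫ s in (0 : ℝ)..t, c s ≤ j / 2 →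
      A + ∫ s in (0 : ℝ)..t, c s * y s ≤ A * 2 ^ (j + 1) := by
  have h0 : (0 : ℝ) ∈ Icc (0 : ℝ) 1 := left_mem_Icc.2 zero_le_one
  induction j with
  | zero =>
    intro t ht hct
    have := le_two_mul_of_le_add_integral hc hc0 hy hy0 hineq le_rfl ht.1 ht.2
      (by simp only [CharP.cast_eq_zero, zero_div] at hct; linarith) (B := A) (by simp)
    simpa [mul_comm] using this
  | succ j ih =>
    intro t ht hct
    have hA : 0 ≤ A := by simpa using (hy0 0 h0).trans (hineq 0 h0)
    rcases le_or_gt (∫ s in (0 : ℝ)..t, c s) (j / 2) with hle | hle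
    · calc _ ≤ A * 2 ^ (j + 1) := ih t ht hle
        _ ≤ A * 2 ^ (j + 1 + 1) := by gcongr <;> norm_num
    have hw : ContinuousOn (fun r => ∫ s in (0 : ℝ)..r, c s) (Icc 0 t) := by
      simpa [uIcc_of_le ht.1] using intervalIntegral.continuousOn_primitive_interval
        (a := 0) (b := t) (μ := volume) (f := c)
        (by simpa [uIcc_of_le ht.1] using hc.mono_set (Icc_subset_Icc_right ht.2))
    obtain ⟨a, ha, hwa⟩ := intermediate_value_Icc ht.1 hw
      (show (j : ℝ) / 2 ∈ Icc _ _ by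
        simp only [intervalIntegral.integral_same]; exact ⟨by positivity, hle.le⟩)
    simp only at hwa
    have ha' : a ∈ Icc (0 : ℝ) 1 := ⟨ha.1, ha.2.trans ht.2⟩
    have hcat : ∫ s in a..t, c s ≤ 1 / 2 := by
      rw [← intervalIntegral.integral_interval_sub_left
        (hc.intervalIntegrable_of_mem_Icc h0 ht) (hc.intervalIntegrable_of_mem_Icc h0 ha'), hwa]
      push_cast at hct
      linarith
    have := le_two_mul_of_le_add_integral hc hc0 hy hy0 hineq ha.1 ha.2 ht.2 hcat
      (ih a ha' hwa.le)
    rw [pow_succ]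
    linarith

theorem le_mul_two_pow_of_le_add_integral (hc : IntegrableOn c (Icc 0 1))
    (hc0 : ∀ s ∈ Icc (0 : ℝ) 1, 0 ≤ c s) (hy : ContinuousOn y (Icc 0 1))
    (hy0 : ∀ s ∈ Icc (0 : ℝ) 1, 0 ≤ y s)
    (hineq : ∀ t ∈ Icc (0 : ℝ) 1, y t ≤ A + ∫ s in (0 : ℝ)..t, c s * y s)
    {W : ℝ} (hW : ∫ s in (0 : ℝ)..1, c s ≤ W) :
    ∀ t ∈ Icc (0 : ℝ) 1, y t ≤ A * 2 ^ (⌈2 * W⌉₊ + 1) := by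
  intro t ht
  refine (hineq t ht).trans (add_integral_le_mul_two_pow hc hc0 hy hy0 hineq _ t ht ?_)
  have h1 : (0 : ℝ) ≤ ∫ s in t..1, c s :=
    intervalIntegral.integral_nonneg ht.2 fun s hs => hc0 s ⟨ht.1.trans hs.1, hs.2⟩
  rw [← intervalIntegral.integral_add_adjacent_intervals
    (hc.intervalIntegrable_of_mem_Icc (left_mem_Icc.2 zero_le_one) ht)
    (hc.intervalIntegrable_of_mem_Icc ht (right_mem_Icc.2 zero_le_one))] at hW
  linarith [Nat.le_ceil (2 * W)]

end Gronwall

section SumSmul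

variable {ι E : Type*} [Fintype ι] [NormedAddCommGroup E] [NormedSpace ℝ E]

lemma norm_sum_smul_le (v : EuclideanSpace ℝ ι) {b : ι → E} {B : ℝ} (hB : ∀ i, ‖b i‖ ≤ B) :
    ‖∑ i, v i • b i‖ ≤ Fintype.card ι * B * ‖v‖ := by
  calc ‖∑ i, v i • b i‖ ≤ ∑ i, ‖v i • b i‖ := norm_sum_le _ _
    _ ≤ ∑ _i : ι, ‖v‖ * B := Finset.sum_le_sum fun i _ => by
        rw [norm_smul]
        exact mul_le_mul (PiLp.norm_apply_le v i) (hB i) (norm_nonneg _) (norm_nonneg _)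
    _ = Fintype.card ι * B * ‖v‖ := by
        rw [Finset.sum_const, Finset.card_univ, nsmul_eq_mul]; ring

lemma integrableOn_sum_smul {p : ℝ → EuclideanSpace ℝ ι} {b : ℝ → ι → E} {S : Set ℝ}
    (hS : IsCompact S) (hp : IntegrableOn p S) (hb : ∀ i, ContinuousOn (fun s => b s i) S) :
    IntegrableOn (fun s => ∑ i, p s i • b s i) S :=
  integrable_finsetSum _ fun i _ =>
    IntegrableOn.smul_continuousOn (f := fun s => p s i)
      ((EuclideanSpace.proj (𝕜 := ℝ) i).integrable_comp hp) (hb i) hS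

lemma norm_intervalIntegral_sum_smul_le {w : ℝ → EuclideanSpace ℝ ι} {β : ℝ → ι → E}
    {a b B : ℝ} (hw : IntegrableOn (fun s => ‖w s‖) (Ι a b))
    (hβ : ∀ s ∈ Ι a b, ∀ i, ‖β s i‖ ≤ B) :
    ‖∫ s in a..b, ∑ i, w s i • β s i‖ ≤ Fintype.card ι * B * ∫ s in Ι a b, ‖w s‖ := by
  rw [intervalIntegral.norm_integral_eq_norm_integral_uIoc, ← integral_const_mul]
  exact norm_integral_le_of_norm_le (hw.const_mul _)
    (ae_restrict_of_forall_mem measurableSet_uIoc fun s hs => norm_sum_smul_le _ (hβ s hs))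

end SumSmul

section WeakL2

variable {v : ℝ → EuclideanSpace ℝ (Fin k)}

lemma l2sq_eq_norm_toLp_sq (hv : MemLp v 2 (volume.restrict (Icc (0 : ℝ) 1))) :
    l2sq v = ‖hv.toLp‖ ^ 2 := by
  rw [← real_inner_self_eq_norm_sq, L2.inner_def, l2sq]
  refine integral_congr_ae ?_
  filter_upwards [hv.coeFn_toLp] with t ht
  rw [ht, real_inner_self_eq_norm_sq]

lemma integral_norm_le_of_l2sq (hv : MemLp v 2 (volume.restrict (Icc (0 : ℝ) 1)))
    {S : Set ℝ} (hSsub : S ⊆ Icc 0 1) {δ : ℝ} (hδ : 0 < δ) :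
    ∫ s in S, ‖v s‖ ≤ (δ * l2sq v + volume.real S / δ) / 2 := by
  have hsq : IntegrableOn (fun s => ‖v s‖ ^ 2) (Icc 0 1) := hv.integrable_norm_pow two_ne_zero
  have hSfin : volume S ≠ ⊤ := (measure_mono hSsub).trans_lt (by simp) |>.ne
  -- AM-GM
  have hpt : ∀ s, ‖v s‖ ≤ (δ * ‖v s‖ ^ 2 + 1 / δ) / 2 := fun s => by
    have hnonneg : 0 ≤ (δ * ‖v s‖ - 1) ^ 2 / δ := by positivity
    have hexpand : (δ * ‖v s‖ - 1) ^ 2 / δ = δ * ‖v s‖ ^ 2 + 1 / δ - 2 * ‖v s‖ := by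
      field_simp; ring
    linarith
  have hRHS : IntegrableOn (fun s => δ * ‖v s‖ ^ 2 + 1 / δ) S :=
    ((hsq.mono_set hSsub).const_mul δ).add (integrableOn_const hSfin)
  calc ∫ s in S, ‖v s‖ ≤ ∫ s in S, (δ * ‖v s‖ ^ 2 + 1 / δ) / 2 :=
        integral_mono_of_nonneg (ae_of_all _ fun s => norm_nonneg _) (hRHS.div_const 2)
          (ae_of_all _ hpt)
    _ = (δ * (∫ s in S, ‖v s‖ ^ 2) + volume.real S / δ) / 2 := by
        rw [integral_div, integral_add ((hsq.mono_set hSsub).const_mul δ)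
          (integrableOn_const hSfin), integral_const_mul, setIntegral_const, smul_eq_mul,
          mul_one_div]
    _ ≤ (δ * l2sq v + volume.real S / δ) / 2 := by
        gcongr
        exact setIntegral_mono_set hsq (ae_of_all _ fun s => sq_nonneg _) hSsub.eventuallyLE

variable {u : ℕ → ℝ → EuclideanSpace ℝ (Fin k)} {uinf : ℝ → EuclideanSpace ℝ (Fin k)}

theorem WeakL2.exists_l2sq_le (hweak : WeakL2 u uinf)
    (hu : ∀ m, MemLp (u m) 2 (volume.restrict (Icc (0 : ℝ) 1))) : ∃ C, ∀ m, l2sq (u m) ≤ C := by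
  have hbdd : ∀ f : Lp (EuclideanSpace ℝ (Fin k)) 2 (volume.restrict (Icc (0 : ℝ) 1)),
      ∃ C, ∀ m, ‖innerSL ℝ (hu m).toLp f‖ ≤ C := by
    intro f
    obtain ⟨C, hC⟩ := (hweak f (Lp.memLp f)).norm.bddAbove_range
    refine ⟨C, fun m => (le_of_eq ?_).trans (hC (mem_range_self m))⟩
    rw [innerSL_apply_apply, L2.inner_def]
    congr 1
    refine integral_congr_ae ?_
    filter_upwards [(hu m).coeFn_toLp] with t ht
    rw [ht, real_inner_comm]
  obtain ⟨C, hC⟩ := banach_steinhaus hbdd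
  refine ⟨C ^ 2, fun m => ?_⟩
  rw [l2sq_eq_norm_toLp_sq (hu m), ← innerSL_apply_norm ℝ]
  exact pow_le_pow_left₀ (norm_nonneg _) (hC m) 2

theorem WeakL2.exists_integral_norm_le (hweak : WeakL2 u uinf)
    (hu : ∀ m, MemLp (u m) 2 (volume.restrict (Icc (0 : ℝ) 1))) :
    ∃ R, ∀ m, ∫ s in Icc (0 : ℝ) 1, ‖u m s‖ ≤ R := by
  obtain ⟨C, hC⟩ := hweak.exists_l2sq_le hu
  refine ⟨(C + 1) / 2, fun m => ?_⟩
  have := integral_norm_le_of_l2sq (hu m) subset_rfl one_pos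
  simp only [one_mul, div_one, Real.volume_real_Icc_of_le zero_le_one, sub_zero] at this
  linarith [hC m]

theorem WeakL2.sub_limit (hweak : WeakL2 u uinf)
    (hu : ∀ m, MemLp (u m) 2 (volume.restrict (Icc (0 : ℝ) 1)))
    (huinf : MemLp uinf 2 (volume.restrict (Icc (0 : ℝ) 1))) :
    WeakL2 (fun m => u m - uinf) 0 := by
  intro v hv
  simpa [inner_sub_right, integral_sub (hv.integrable_inner (hu _)) (hv.integrable_inner huinf)]
    using (hweak v hv).sub_const (∫ t in Icc (0 : ℝ) 1, ⟪v t, uinf t⟫_ℝ)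

theorem WeakL2.tendsto_intervalIntegral_sum_smul {w : ℕ → ℝ → EuclideanSpace ℝ (Fin k)}
    (hweak : WeakL2 w 0) (hw : ∀ m, MemLp (w m) 2 (volume.restrict (Icc (0 : ℝ) 1)))
    {β : ℝ → Fin k → EuclideanSpace ℝ (Fin n)}
    (hβ : ∀ i, ContinuousOn (fun s => β s i) (Icc 0 1)) {t : ℝ} (ht : t ∈ Icc (0 : ℝ) 1) :
    Tendsto (fun m => ∫ s in (0 : ℝ)..t, ∑ i, w m s i • β s i) atTop (𝓝 0) := by
  refine ((PiLp.continuous_toLp 2 _).tendsto 0).comp (tendsto_pi_nhds.2 fun j => ?_)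
  -- the `j`-th coordinate is the pairing of `w m` with the test function `γ`
  let βj : ℝ → EuclideanSpace ℝ (Fin k) := fun s => WithLp.toLp 2 fun i => β s i j
  let γ := (Ioc 0 t).indicator βj
  have hβj : ContinuousOn βj (Icc 0 1) := (PiLp.continuous_toLp 2 _).comp_continuousOn
    (continuousOn_pi.2 fun i => (PiLp.continuous_apply 2 _ j).comp_continuousOn (hβ i))
  have hγ : MemLp γ 2 (volume.restrict (Icc (0 : ℝ) 1)) :=
    hβj.memLp_Icc.indicator measurableSet_Ioc
  have hIoc : Ioc 0 t ⊆ Icc (0 : ℝ) 1 := Ioc_subset_Icc_self.trans (Icc_subset_Icc_right ht.2)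
  have hcoord : ∀ m, (∫ s in (0 : ℝ)..t, ∑ i, w m s i • β s i) j =
      ∫ s in Icc (0 : ℝ) 1, ⟪γ s, w m s⟫_ℝ := by
    intro m
    have hint : IntervalIntegrable (fun s => ∑ i, w m s i • β s i) volume 0 t :=
      (integrableOn_sum_smul isCompact_Icc ((hw m).integrable one_le_two)
        hβ).intervalIntegrable_of_mem_Icc (left_mem_Icc.2 zero_le_one) ht
    have hγw : (fun s => ⟪γ s, w m s⟫_ℝ) = (Ioc 0 t).indicator fun s => ⟪βj s, w m s⟫_ℝ := by
      ext s
      by_cases hs : s ∈ Ioc 0 t <;> simp [γ, hs]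
    rw [hγw, setIntegral_indicator measurableSet_Ioc, inter_eq_self_of_subset_right hIoc,
      ← intervalIntegral.integral_of_le ht.1]
    refine ((EuclideanSpace.proj (𝕜 := ℝ) j).intervalIntegral_comp_comm hint).symm.trans ?_
    simp [βj, PiLp.inner_apply]
  have hlim := hweak γ hγ
  simp only [Pi.zero_apply, inner_zero_right, integral_zero] at hlim
  exact hlim.congr fun m => (hcoord m).symm

lemma exists_forall_integral_norm_uIoc_lt {w : ℕ → ℝ → EuclideanSpace ℝ (Fin k)} {C : ℝ}
    (hw : ∀ m, MemLp (w m) 2 (volume.restrict (Icc (0 : ℝ) 1))) (hC : ∀ m, l2sq (w m) ≤ C)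
    {η : ℝ} (hη : 0 < η) :
    ∃ δ > 0, ∀ m, ∀ a ∈ Icc (0 : ℝ) 1, ∀ b ∈ Icc (0 : ℝ) 1, |b - a| < δ →
      ∫ s in Ι a b, ‖w m s‖ < η := by
  obtain ⟨ρ, hρ, hρC⟩ := exists_pos_mul_lt hη C
  refine ⟨η * ρ, mul_pos hη hρ, fun m a ha b hb hab => ?_⟩
  have h := integral_norm_le_of_l2sq (hw m) (uIoc_subset_uIcc.trans (uIcc_subset_Icc ha hb)) hρ
  rw [Real.volume_real_uIoc] at h
  have : |b - a| / ρ < η := (div_lt_iff₀ hρ).2 hab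
  nlinarith [mul_le_mul_of_nonneg_left (hC m) hρ.le]

end WeakL2

section ControlIntegral

variable {P E : Type*} [PseudoMetricSpace P] [NormedAddCommGroup E] [NormedSpace ℝ E]

def controlIntegral (w : ℝ → EuclideanSpace ℝ (Fin k)) (β : Fin k → ℝ × P → E) (p : ℝ × P) :
    E :=
  ∫ s in (0 : ℝ)..p.1, ∑ i, w s i • β i (s, p.2)

variable {w : ℝ → EuclideanSpace ℝ (Fin k)} {β : Fin k → ℝ × P → E} {K : Set P}

lemma intervalIntegrable_controlIntegrand (hw : IntegrableOn w (Icc 0 1))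
    (hβ : ∀ i, ContinuousOn (β i) (Icc 0 1 ×ˢ K)) {θ : P} (hθ : θ ∈ K) {a b : ℝ}
    (ha : a ∈ Icc (0 : ℝ) 1) (hb : b ∈ Icc (0 : ℝ) 1) :
    IntervalIntegrable (fun s => ∑ i, w s i • β i (s, θ)) volume a b :=
  (integrableOn_sum_smul isCompact_Icc hw fun i => (hβ i).comp
    (continuousOn_id.prodMk continuousOn_const) fun _ hs => ⟨hs, hθ⟩).intervalIntegrable_of_mem_Icc
      ha hb

lemma norm_controlIntegral_time_sub_le (hw : IntegrableOn w (Icc 0 1))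
    (hβ : ∀ i, ContinuousOn (β i) (Icc 0 1 ×ˢ K)) {B : ℝ}
    (hB : ∀ i, ∀ q ∈ Icc 0 1 ×ˢ K, ‖β i q‖ ≤ B) {θ : P} (hθ : θ ∈ K) {a b : ℝ}
    (ha : a ∈ Icc (0 : ℝ) 1) (hb : b ∈ Icc (0 : ℝ) 1) :
    ‖controlIntegral w β (b, θ) - controlIntegral w β (a, θ)‖ ≤ k * B * ∫ s in Ι a b, ‖w s‖ := by
  have h0 := left_mem_Icc.2 (zero_le_one' ℝ)
  have hab : Ι a b ⊆ Icc 0 1 := uIoc_subset_uIcc.trans (uIcc_subset_Icc ha hb)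
  rw [controlIntegral, controlIntegral, intervalIntegral.integral_interval_sub_left
    (intervalIntegrable_controlIntegrand hw hβ hθ h0 hb)
    (intervalIntegrable_controlIntegrand hw hβ hθ h0 ha)]
  simpa using norm_intervalIntegral_sum_smul_le (hw.mono_set hab).norm
    fun s hs i => hB i (s, θ) ⟨hab hs, hθ⟩

lemma norm_controlIntegral_param_sub_le (hw : IntegrableOn w (Icc 0 1))
    (hβ : ∀ i, ContinuousOn (β i) (Icc 0 1 ×ˢ K)) {θ θ' : P} (hθ : θ ∈ K) (hθ' : θ' ∈ K)
    {η : ℝ} (hη : ∀ s ∈ Icc (0 : ℝ) 1, ∀ i, ‖β i (s, θ) - β i (s, θ')‖ ≤ η) {t : ℝ}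
    (ht : t ∈ Icc (0 : ℝ) 1) :
    ‖controlIntegral w β (t, θ) - controlIntegral w β (t, θ')‖ ≤ k * η * ∫ s in Ι 0 t, ‖w s‖ := by
  have h0 := left_mem_Icc.2 (zero_le_one' ℝ)
  have h0t : Ι 0 t ⊆ Icc 0 1 := uIoc_subset_uIcc.trans (uIcc_subset_Icc h0 ht)
  rw [controlIntegral, controlIntegral, ← intervalIntegral.integral_sub
    (intervalIntegrable_controlIntegrand hw hβ hθ h0 ht)
    (intervalIntegrable_controlIntegrand hw hβ hθ' h0 ht)]
  simp_rw [← Finset.sum_sub_distrib, ← smul_sub]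
  simpa using norm_intervalIntegral_sum_smul_le (hw.mono_set h0t).norm
    fun s hs i => hη s (h0t hs) i

end ControlIntegral

section WeakToUniform

variable {P : Type*} [PseudoMetricSpace P] {w : ℕ → ℝ → EuclideanSpace ℝ (Fin k)} {K : Set P}
  {β : Fin k → ℝ × P → EuclideanSpace ℝ (Fin n)}

lemma exists_forall_norm_controlIntegral_param_sub_lt {C : ℝ}
    (hw : ∀ m, MemLp (w m) 2 (volume.restrict (Icc (0 : ℝ) 1))) (hC : ∀ m, l2sq (w m) ≤ C)
    (hK : IsCompact K) (hβ : ∀ i, ContinuousOn (β i) (Icc 0 1 ×ˢ K)) {ε : ℝ} (hε : 0 < ε) :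
    ∃ δ > 0, ∀ m, ∀ t ∈ Icc (0 : ℝ) 1, ∀ θ ∈ K, ∀ θ' ∈ K, dist θ θ' < δ →
      ‖controlIntegral (w m) β (t, θ) - controlIntegral (w m) β (t, θ')‖ < ε := by
  obtain ⟨η, hη, hηε⟩ := exists_pos_mul_lt hε (k * ((C + 1) / 2))
  obtain ⟨δ, hδ, hβδ⟩ := Metric.uniformContinuousOn_iff.1
    ((isCompact_Icc.prod hK).uniformContinuousOn_of_continuous (continuousOn_pi.2 hβ)) η hη
  refine ⟨δ, hδ, fun m t ht θ hθ θ' hθ' hθθ' => ?_⟩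
  have hL1 := integral_norm_le_of_l2sq (hw m) (uIoc_subset_uIcc.trans
    (uIcc_subset_Icc (left_mem_Icc.2 zero_le_one) ht)) one_pos
  rw [Real.volume_real_uIoc, sub_zero, abs_of_nonneg ht.1] at hL1
  refine (norm_controlIntegral_param_sub_le ((hw m).integrable one_le_two) hβ hθ hθ' (η := η)
    (fun s hs i => ?_) ht).trans_lt ?_
  · rw [← dist_eq_norm]
    refine (dist_le_pi_dist (fun i => β i (s, θ)) (fun i => β i (s, θ')) i).trans
      (hβδ (s, θ) ⟨hs, hθ⟩ (s, θ') ⟨hs, hθ'⟩ ?_).le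
    simpa [Prod.dist_eq] using hθθ'
  · calc k * η * ∫ s in Ι 0 t, ‖w m s‖ ≤ k * η * ((C + 1) / 2) := by
          gcongr
          linarith [hC m, ht.2]
      _ = k * ((C + 1) / 2) * η := by ring
      _ < ε := hηε

lemma exists_forall_norm_controlIntegral_time_sub_lt {C : ℝ}
    (hw : ∀ m, MemLp (w m) 2 (volume.restrict (Icc (0 : ℝ) 1))) (hC : ∀ m, l2sq (w m) ≤ C)
    (hK : IsCompact K) (hβ : ∀ i, ContinuousOn (β i) (Icc 0 1 ×ˢ K)) {ε : ℝ} (hε : 0 < ε) :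
    ∃ δ > 0, ∀ m, ∀ θ ∈ K, ∀ a ∈ Icc (0 : ℝ) 1, ∀ b ∈ Icc (0 : ℝ) 1, |b - a| < δ →
      ‖controlIntegral (w m) β (b, θ) - controlIntegral (w m) β (a, θ)‖ < ε := by
  obtain ⟨B, hB⟩ := (isCompact_Icc.prod hK).exists_bound_of_continuousOn (continuousOn_pi.2 hβ)
  obtain ⟨η, hη, hηε⟩ := exists_pos_mul_lt hε (k * |B|)
  obtain ⟨δ, hδ, hwδ⟩ := exists_forall_integral_norm_uIoc_lt hw hC hη
  refine ⟨δ, hδ, fun m θ hθ a ha b hb hab => ?_⟩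
  refine (norm_controlIntegral_time_sub_le ((hw m).integrable one_le_two) hβ (B := |B|)
    (fun i q hq => (norm_le_pi_norm _ i).trans ((hB q hq).trans (le_abs_self B))) hθ ha
    hb).trans_lt ?_
  calc k * |B| * ∫ s in Ι a b, ‖w m s‖ ≤ k * |B| * η := by
        gcongr
        exact (hwδ m a ha b hb hab).le
    _ < ε := hηε

lemma equicontinuousOn_controlIntegral {C : ℝ}
    (hw : ∀ m, MemLp (w m) 2 (volume.restrict (Icc (0 : ℝ) 1))) (hC : ∀ m, l2sq (w m) ≤ C)
    (hK : IsCompact K) (hβ : ∀ i, ContinuousOn (β i) (Icc 0 1 ×ˢ K)) :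
    EquicontinuousOn (fun m => controlIntegral (w m) β) (Icc 0 1 ×ˢ K) := by
  rintro ⟨t₀, θ₀⟩ ⟨ht₀, hθ₀⟩
  rw [Metric.uniformity_basis_dist.equicontinuousWithinAt_iff_right]
  intro ε hε
  obtain ⟨δ₁, hδ₁, hparam⟩ :=
    exists_forall_norm_controlIntegral_param_sub_lt hw hC hK hβ (half_pos hε)
  obtain ⟨δ₂, hδ₂, htime⟩ :=
    exists_forall_norm_controlIntegral_time_sub_lt hw hC hK hβ (half_pos hε)
  filter_upwards [self_mem_nhdsWithin,
    nhdsWithin_le_nhds (Metric.ball_mem_nhds _ (lt_min hδ₁ hδ₂))] with ⟨t, θ⟩ ⟨ht, hθ⟩ hdist m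
  rw [Metric.mem_ball, Prod.dist_eq, max_lt_iff, lt_min_iff, lt_min_iff] at hdist
  simp only at ht hθ hdist
  have h₁ := hparam m t ht θ hθ θ₀ hθ₀ hdist.2.1
  have h₂ := htime m θ₀ hθ₀ t₀ ht₀ t ht (by simpa [Real.dist_eq] using hdist.1.2)
  rw [dist_comm, dist_eq_norm]
  calc _ = ‖(controlIntegral (w m) β (t, θ) - controlIntegral (w m) β (t, θ₀)) +
        (controlIntegral (w m) β (t, θ₀) - controlIntegral (w m) β (t₀, θ₀))‖ := by congr 1; abel
    _ < ε := (norm_add_le _ _).trans_lt (by linarith)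

theorem WeakL2.tendstoUniformlyOn_controlIntegral (hweak : WeakL2 w 0)
    (hw : ∀ m, MemLp (w m) 2 (volume.restrict (Icc (0 : ℝ) 1))) (hK : IsCompact K)
    (hβ : ∀ i, ContinuousOn (β i) (Icc 0 1 ×ˢ K)) :
    TendstoUniformlyOn (fun m => controlIntegral (w m) β) 0 atTop (Icc 0 1 ×ˢ K) := by
  obtain ⟨C, hC⟩ := hweak.exists_l2sq_le hw
  refine (equicontinuousOn_controlIntegral hw hC hK hβ).tendstoUniformlyOn_of_tendsto
    (isCompact_Icc.prod hK) ?_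
  rintro ⟨t, θ⟩ ⟨ht, hθ⟩
  exact hweak.tendsto_intervalIntegral_sum_smul hw (β := fun s i => β i (s, θ))
    (fun i => (hβ i).comp (continuousOn_id.prodMk continuousOn_const) fun _ hs => ⟨hs, hθ⟩) ht

end WeakToUniform

section Trajectory

variable {Θ : Set (EuclideanSpace ℝ (Fin d))}
  {F0 : EuclideanSpace ℝ (Fin n) → EuclideanSpace ℝ (Fin d) → EuclideanSpace ℝ (Fin n)}
  {F : Fin k → EuclideanSpace ℝ (Fin n) → EuclideanSpace ℝ (Fin d) → EuclideanSpace ℝ (Fin n)}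
  {L : ℝ} {x0 : EuclideanSpace ℝ (Fin d) → EuclideanSpace ℝ (Fin n)}

lemma integrableOn_field (hF0 : JointlyLipschitzOn L F0 Θ)
    (hF : ∀ i, JointlyLipschitzOn L (F i) Θ) {p : ℝ → EuclideanSpace ℝ (Fin k)}
    (hp : IntegrableOn p (Icc 0 1)) {z : ℝ → EuclideanSpace ℝ (Fin n)}
    (hz : ContinuousOn z (Icc 0 1)) {θ : EuclideanSpace ℝ (Fin d)} (hθ : θ ∈ Θ) :
    IntegrableOn (fun s => F0 (z s) θ + ∑ i, p s i • F i (z s) θ) (Icc 0 1) :=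
  (hF0.continuousOn_comp hz continuousOn_const fun _ _ => hθ).integrableOn_Icc.add
    (integrableOn_sum_smul isCompact_Icc hp fun i =>
      (hF i).continuousOn_comp hz continuousOn_const fun _ _ => hθ)

lemma norm_field_sub_le (hF0 : JointlyLipschitzOn L F0 Θ) (hF : ∀ i, JointlyLipschitzOn L (F i) Θ)
    {θ θ' : EuclideanSpace ℝ (Fin d)} (hθ : θ ∈ Θ) (hθ' : θ' ∈ Θ) (a b : EuclideanSpace ℝ (Fin n))
    (v v' : EuclideanSpace ℝ (Fin k)) :
    ‖(F0 a θ + ∑ i, v i • F i a θ) - (F0 b θ' + ∑ i, v' i • F i b θ') -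
        ∑ i, (v - v') i • F i b θ'‖ ≤ L * (1 + k * ‖v‖) * (‖a - b‖ + ‖θ - θ'‖) := by
  have hsplit : (F0 a θ + ∑ i, v i • F i a θ) - (F0 b θ' + ∑ i, v' i • F i b θ') -
      ∑ i, (v - v') i • F i b θ' = (F0 a θ - F0 b θ') + ∑ i, v i • (F i a θ - F i b θ') := by
    simp only [PiLp.sub_apply, sub_smul, smul_sub, Finset.sum_sub_distrib]
    abel
  rw [hsplit]
  calc _ ≤ ‖F0 a θ - F0 b θ'‖ + ‖∑ i, v i • (F i a θ - F i b θ')‖ := norm_add_le _ _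
    _ ≤ L * (‖a - b‖ + ‖θ - θ'‖) + k * (L * (‖a - b‖ + ‖θ - θ'‖)) * ‖v‖ := by
        gcongr
        · exact hF0 _ _ _ _ hθ hθ'
        · simpa using norm_sum_smul_le v fun i => hF i a b θ θ' hθ hθ'
    _ = L * (1 + k * ‖v‖) * (‖a - b‖ + ‖θ - θ'‖) := by ring

lemma integrableOn_lipschitz_coeff {p : ℝ → EuclideanSpace ℝ (Fin k)}
    (hp : IntegrableOn p (Icc 0 1)) : IntegrableOn (fun s => L * (1 + k * ‖p s‖)) (Icc 0 1) :=
  ((integrable_const 1).add (hp.norm.const_mul k)).const_mul L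

lemma intervalIntegral_lipschitz_coeff_le (hL : 0 ≤ L) {p : ℝ → EuclideanSpace ℝ (Fin k)}
    (hp : IntegrableOn p (Icc 0 1)) {R : ℝ} (hR : ∫ s in Icc (0 : ℝ) 1, ‖p s‖ ≤ R) {t : ℝ}
    (ht : t ∈ Icc (0 : ℝ) 1) : ∫ s in (0 : ℝ)..t, L * (1 + k * ‖p s‖) ≤ L * (1 + k * R) := by
  rw [intervalIntegral.integral_of_le ht.1, ← integral_Icc_eq_integral_Ioc]
  calc ∫ s in Icc 0 t, L * (1 + k * ‖p s‖) ≤ ∫ s in Icc 0 1, L * (1 + k * ‖p s‖) :=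
        setIntegral_mono_set (integrableOn_lipschitz_coeff hp)
          (ae_of_all _ fun s => by positivity) (Icc_subset_Icc_right ht.2).eventuallyLE
    _ ≤ L * (1 + k * R) := by
        rw [integral_const_mul, integral_add (integrable_const 1) (hp.norm.const_mul k),
          integral_const_mul]
        simp only [integral_const, smul_eq_mul, mul_one]
        gcongr
        simp

theorem norm_sub_le_add_integral_of_isTrajectory (hL : 0 ≤ L) (hF0 : JointlyLipschitzOn L F0 Θ)
    (hF : ∀ i, JointlyLipschitzOn L (F i) Θ) {θ θ' : EuclideanSpace ℝ (Fin d)} (hθ : θ ∈ Θ)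
    (hθ' : θ' ∈ Θ) {p q : ℝ → EuclideanSpace ℝ (Fin k)} (hp : IntegrableOn p (Icc 0 1))
    (hq : IntegrableOn q (Icc 0 1)) {x y : ℝ → EuclideanSpace ℝ (Fin n)}
    (hx : IsTrajectory F0 F x0 p θ x) (hy : IsTrajectory F0 F x0 q θ' y)
    {R : ℝ} (hR : ∫ s in Icc (0 : ℝ) 1, ‖p s‖ ≤ R) {A : ℝ}
    (hA : ∀ t ∈ Icc (0 : ℝ) 1, ‖∫ s in (0 : ℝ)..t, ∑ i, (p - q) s i • F i (y s) θ'‖ ≤ A) :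
    ∀ t ∈ Icc (0 : ℝ) 1, ‖x t - y t‖ ≤ ‖x0 θ - x0 θ'‖ + L * (1 + k * R) * ‖θ - θ'‖ + A +
      ∫ s in (0 : ℝ)..t, L * (1 + k * ‖p s‖) * ‖x s - y s‖ := by
  obtain ⟨hxc, hx⟩ := hx
  obtain ⟨hyc, hy⟩ := hy
  intro t ht
  have h0 : (0 : ℝ) ∈ Icc (0 : ℝ) 1 := left_mem_Icc.2 zero_le_one
  set c : ℝ → ℝ := fun s => L * (1 + k * ‖p s‖)
  set f : ℝ → EuclideanSpace ℝ (Fin n) := fun s => F0 (x s) θ + ∑ i, p s i • F i (x s) θ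
  set g : ℝ → EuclideanSpace ℝ (Fin n) := fun s => F0 (y s) θ' + ∑ i, q s i • F i (y s) θ'
  set h : ℝ → EuclideanSpace ℝ (Fin n) := fun s => ∑ i, (p - q) s i • F i (y s) θ'
  have hIf := (integrableOn_field hF0 hF hp hxc hθ).intervalIntegrable_of_mem_Icc h0 ht
  have hIg := (integrableOn_field hF0 hF hq hyc hθ').intervalIntegrable_of_mem_Icc h0 ht
  have hIh := (integrableOn_sum_smul isCompact_Icc (hp.sub hq) fun i =>
    (hF i).continuousOn_comp hyc continuousOn_const fun _ _ => hθ').intervalIntegrable_of_mem_Icc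
      h0 ht
  have hdecomp : x t - y t =
      (x0 θ - x0 θ') + (∫ s in (0 : ℝ)..t, (f s - g s - h s)) + ∫ s in (0 : ℝ)..t, h s := by
    rw [hx t ht, hy t ht, add_assoc, ← intervalIntegral.integral_add ((hIf.sub hIg).sub hIh) hIh]
    simp only [sub_add_cancel]
    rw [intervalIntegral.integral_sub hIf hIg]
    abel
  have hdrift : ‖∫ s in (0 : ℝ)..t, (f s - g s - h s)‖ ≤
      (∫ s in (0 : ℝ)..t, c s * ‖x s - y s‖) + (∫ s in (0 : ℝ)..t, c s) * ‖θ - θ'‖ := by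
    have hc : IntegrableOn c (Icc 0 1) := integrableOn_lipschitz_coeff hp
    have hcxy : IntegrableOn (fun s => c s * ‖x s - y s‖) (Icc 0 1) :=
      hc.mul_continuousOn (hxc.sub hyc).norm isCompact_Icc
    have hcθ : IntegrableOn (fun s => c s * ‖θ - θ'‖) (Icc 0 1) := hc.mul_const _
    rw [← intervalIntegral.integral_mul_const, ← intervalIntegral.integral_add
      (hcxy.intervalIntegrable_of_mem_Icc h0 ht) (hcθ.intervalIntegrable_of_mem_Icc h0 ht)]
    refine intervalIntegral.norm_integral_le_of_norm_le ht.1 (ae_of_all _ fun s _ => ?_)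
      ((hcxy.add hcθ).intervalIntegrable_of_mem_Icc h0 ht)
    exact (norm_field_sub_le hF0 hF hθ hθ' (x s) (y s) (p s) (q s)).trans_eq (mul_add _ _ _)
  calc ‖x t - y t‖ ≤ ‖x0 θ - x0 θ'‖ + ((∫ s in (0 : ℝ)..t, c s * ‖x s - y s‖) +
        (∫ s in (0 : ℝ)..t, c s) * ‖θ - θ'‖) + A := by
        rw [hdecomp]
        refine (norm_add_le _ _).trans (add_le_add ((norm_add_le _ _).trans ?_) (hA t ht))
        gcongr
    _ ≤ _ := by
        have := mul_le_mul_of_nonneg_right (intervalIntegral_lipschitz_coeff_le hL hp hR ht)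
          (norm_nonneg (θ - θ'))
        linarith

theorem norm_sub_le_of_isTrajectory (hL : 0 ≤ L) (hF0 : JointlyLipschitzOn L F0 Θ)
    (hF : ∀ i, JointlyLipschitzOn L (F i) Θ) {θ θ' : EuclideanSpace ℝ (Fin d)} (hθ : θ ∈ Θ)
    (hθ' : θ' ∈ Θ) {p q : ℝ → EuclideanSpace ℝ (Fin k)} (hp : IntegrableOn p (Icc 0 1))
    (hq : IntegrableOn q (Icc 0 1)) {x y : ℝ → EuclideanSpace ℝ (Fin n)}
    (hx : IsTrajectory F0 F x0 p θ x) (hy : IsTrajectory F0 F x0 q θ' y)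
    {R : ℝ} (hR : ∫ s in Icc (0 : ℝ) 1, ‖p s‖ ≤ R) {A : ℝ}
    (hA : ∀ t ∈ Icc (0 : ℝ) 1, ‖∫ s in (0 : ℝ)..t, ∑ i, (p - q) s i • F i (y s) θ'‖ ≤ A) :
    ∀ t ∈ Icc (0 : ℝ) 1, ‖x t - y t‖ ≤
      (‖x0 θ - x0 θ'‖ + L * (1 + k * R) * ‖θ - θ'‖ + A) * 2 ^ (⌈2 * (L * (1 + k * R))⌉₊ + 1) :=
  le_mul_two_pow_of_le_add_integral (y := fun s => ‖x s - y s‖) (integrableOn_lipschitz_coeff hp)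
    (fun _ _ => by positivity) (hx.1.sub hy.1).norm (fun _ _ => norm_nonneg _)
    (norm_sub_le_add_integral_of_isTrajectory hL hF0 hF hθ hθ' hp hq hx hy hR hA)
    (intervalIntegral_lipschitz_coeff_le hL hp hR (right_mem_Icc.2 zero_le_one))

theorem continuousOn_isTrajectory (hL : 0 ≤ L) (hF0 : JointlyLipschitzOn L F0 Θ)
    (hF : ∀ i, JointlyLipschitzOn L (F i) Θ) (hx0 : ContinuousOn x0 Θ)
    {u : ℝ → EuclideanSpace ℝ (Fin k)} (hu : IntegrableOn u (Icc 0 1))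
    {X : EuclideanSpace ℝ (Fin d) → ℝ → EuclideanSpace ℝ (Fin n)}
    (hX : ∀ θ ∈ Θ, IsTrajectory F0 F x0 u θ (X θ)) :
    ContinuousOn (fun p : ℝ × EuclideanSpace ℝ (Fin d) => X p.2 p.1) (Icc 0 1 ×ˢ Θ) := by
  refine continuousOn_prod_of_tendstoUniformlyOn (fun θ hθ => (hX θ hθ).1) fun θ₀ hθ₀ => ?_
  set W := L * (1 + k * ∫ s in Icc (0 : ℝ) 1, ‖u s‖)
  have hbound : ∀ θ ∈ Θ, ∀ t ∈ Icc (0 : ℝ) 1, ‖X θ t - X θ₀ t‖ ≤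
      (‖x0 θ - x0 θ₀‖ + W * ‖θ - θ₀‖ + 0) * 2 ^ (⌈2 * W⌉₊ + 1) := fun θ hθ =>
    norm_sub_le_of_isTrajectory hL hF0 hF hθ hθ₀ hu hu (hX θ hθ) (hX θ₀ hθ₀) le_rfl
      fun t _ => by simp
  have hlim : Tendsto (fun θ => (‖x0 θ - x0 θ₀‖ + W * ‖θ - θ₀‖ + 0) * 2 ^ (⌈2 * W⌉₊ + 1))
      (𝓝[Θ] θ₀) (𝓝 0) := by
    have := hx0 θ₀ hθ₀
    simpa using (show ContinuousWithinAt (fun θ => (‖x0 θ - x0 θ₀‖ + W * ‖θ - θ₀‖ + 0) *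
      2 ^ (⌈2 * W⌉₊ + 1)) Θ θ₀ by fun_prop).tendsto
  rw [Metric.tendstoUniformlyOn_iff]
  intro ε hε
  filter_upwards [hlim (Iio_mem_nhds hε), self_mem_nhdsWithin] with θ hθε hθ t ht
  rw [dist_comm, dist_eq_norm]
  exact (hbound θ hθ t ht).trans_lt hθε

end Trajectory

/-- uniform convergence of the ensemble flow maps: if `u_m ⇀ u_∞` weakly
in `L²` then `X_m(t,θ) = x_{u_m}^θ(t)` converges to `X_∞` uniformly on `[0,1] × Θ`. -/
theorem ensemble_flow_weak_to_C0 (n d k : ℕ)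
    (Θ : Set (EuclideanSpace ℝ (Fin d))) (hΘ : IsCompact Θ)
    (F0 : EuclideanSpace ℝ (Fin n) → EuclideanSpace ℝ (Fin d) → EuclideanSpace ℝ (Fin n))
    (F : Fin k → EuclideanSpace ℝ (Fin n) → EuclideanSpace ℝ (Fin d) →
      EuclideanSpace ℝ (Fin n))
    (L : ℝ)
    (hF0 : ∀ x₁ x₂ θ₁ θ₂, θ₁ ∈ Θ → θ₂ ∈ Θ →
      ‖F0 x₁ θ₁ - F0 x₂ θ₂‖ ≤ L * (‖x₁ - x₂‖ + ‖θ₁ - θ₂‖))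
    (hF : ∀ i, ∀ x₁ x₂ θ₁ θ₂, θ₁ ∈ Θ → θ₂ ∈ Θ →
      ‖F i x₁ θ₁ - F i x₂ θ₂‖ ≤ L * (‖x₁ - x₂‖ + ‖θ₁ - θ₂‖))
    (x0 : EuclideanSpace ℝ (Fin d) → EuclideanSpace ℝ (Fin n))
    (hx0 : ContinuousOn x0 Θ)
    (u : ℕ → ℝ → EuclideanSpace ℝ (Fin k)) (uinf : ℝ → EuclideanSpace ℝ (Fin k))
    (hu : ∀ m, MemLp (u m) 2 (volume.restrict (Icc (0 : ℝ) 1)))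
    (huinf : MemLp uinf 2 (volume.restrict (Icc (0 : ℝ) 1)))
    (hweak : WeakL2 u uinf)
    (X : ℕ → EuclideanSpace ℝ (Fin d) → ℝ → EuclideanSpace ℝ (Fin n))
    (Xinf : EuclideanSpace ℝ (Fin d) → ℝ → EuclideanSpace ℝ (Fin n))
    (hX : ∀ m, ∀ θ ∈ Θ, IsTrajectory F0 F x0 (u m) θ (X m θ))
    (hXinf : ∀ θ ∈ Θ, IsTrajectory F0 F x0 uinf θ (Xinf θ)) :
    TendstoUniformlyOn
      (fun m (p : ℝ × EuclideanSpace ℝ (Fin d)) => X m p.2 p.1)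
      (fun p => Xinf p.2 p.1) atTop (Icc (0 : ℝ) 1 ×ˢ Θ) := by
  -- `L < 0` is possible only for `n = 0`; the Lipschitz bounds also hold with `max L 0 ≥ 0`
  have hL : (0 : ℝ) ≤ max L 0 := le_max_right L 0
  have hF0' := JointlyLipschitzOn.weaken hF0 (le_max_left L 0)
  have hF' := fun i => JointlyLipschitzOn.weaken (hF i) (le_max_left L 0)
  obtain ⟨R, hR⟩ := hweak.exists_integral_norm_le hu
  have hG := (hweak.sub_limit hu huinf).tendstoUniformlyOn_controlIntegral
    (fun m => (hu m).sub huinf) hΘ (β := fun i p => F i (Xinf p.2 p.1) p.2) fun i =>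
      (hF' i).continuousOn_comp (continuousOn_isTrajectory hL hF0' hF' hx0
        (huinf.integrable one_le_two) hXinf) continuousOn_snd fun p hp => hp.2
  rw [Metric.tendstoUniformlyOn_iff] at hG ⊢
  intro ε hε
  set K : ℝ := 2 ^ (⌈2 * (max L 0 * (1 + k * R))⌉₊ + 1)
  filter_upwards [hG (ε / (2 * K)) (by positivity)] with m hm
  rintro ⟨t, θ⟩ ⟨ht, hθ⟩
  have hdiff := norm_sub_le_of_isTrajectory hL hF0' hF' hθ hθ ((hu m).integrable one_le_two)
    (huinf.integrable one_le_two) (hX m θ hθ) (hXinf θ hθ) (hR m) (A := ε / (2 * K))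
    (fun t' ht' => by
      have h := (hm (t', θ) ⟨ht', hθ⟩).le
      rwa [Pi.zero_apply, dist_zero_left] at h) t ht
  rw [dist_comm, dist_eq_norm]
  calc ‖X m θ t - Xinf θ t‖ ≤ ε / (2 * K) * K := by simpa using hdiff
    _ = ε / 2 := by field_simp [show K ≠ 0 by positivity]
    _ < ε := half_lt_self hε
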